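/- arXiv:0905.4870 — 2 statements merged into one kernel-verified Lean document; each statement's English description precedes it below -/
import Mathlib

section
/- (i) The set I(χ,M) is a W-stable subset of I: if i ∈ I(χ,M) and σ ∈ W, then σi ∈ I(χ,M). (ii) If in addition K is an integral domain and |W| is invertible in K, then a_χ(e_i) = 0 for every i ∈ I₀(χ,M). -/
noncomputable section

/-- The monomial action of `σ ∈ W` on the free module `I →₀ K`,
determined by `σ • e_i = γ_i(σ) • e_{σ i}`. -/
def monAct {K : Type*} [CommRing K] {W : Type*} [Group W] {I : Type*} [MulAction W I]
    (γ : I → W → Kˣ) (σ : W) : (I →₀ K) →ₗ[K] (I →₀ K) :=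
  Finsupp.lsum K fun i => ((γ i σ : Kˣ) : K) • Finsupp.lsingle (σ • i)

/-- The averaging operator
`a_χ = |W|⁻¹ Σ_{σ ∈ W} χ(σ)⁻¹ σ`, where `u` is the unit `|W|` of `K`. -/
def aChi {K : Type*} [CommRing K] {W : Type*} [Group W] [Fintype W] {I : Type*}
    [MulAction W I] (γ : I → W → Kˣ) (χ : W →* Kˣ) (u : Kˣ) :
    (I →₀ K) →ₗ[K] (I →₀ K) :=
  ((u⁻¹ : Kˣ) : K) • ∑ σ : W, (((χ σ)⁻¹ : Kˣ) : K) • monAct γ σ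

/-- The set `I(χ,M)`: those `i ∈ I` such that `γ_i = χ` on the stabilizer `W_i`. -/
def Ichi {K : Type*} [CommRing K] {W : Type*} [Group W] {I : Type*} [MulAction W I]
    (γ : I → W → Kˣ) (χ : W →* Kˣ) : Set I :=
  {i | ∀ σ : W, σ • i = i → γ i σ = χ σ}

/-- The `W`-submodule `_χM` of `M = I →₀ K` generated by the elements
`χ(σ) z − σ z` (as a `K`-submodule; the generating set is `W`-stable
up to such differences, so this agrees with the `W`-submodule generated). -/
def chiDiffSub {K : Type*} [CommRing K] {W : Type*} [Group W] {I : Type*}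
    [MulAction W I] (γ : I → W → Kˣ) (χ : W →* Kˣ) : Submodule K (I →₀ K) :=
  Submodule.span K {x | ∃ (σ : W) (z : I →₀ K),
    x = ((χ σ : Kˣ) : K) • z - monAct γ σ z}

/-- The submodule `M_χ = {z ∈ M | σ z = χ(σ) z for all σ ∈ W}`. -/
def chiFixSub {K : Type*} [CommRing K] {W : Type*} [Group W] {I : Type*}
    [MulAction W I] (γ : I → W → Kˣ) (χ : W →* Kˣ) : Submodule K (I →₀ K) where
  carrier := {z | ∀ σ : W, monAct γ σ z = ((χ σ : Kˣ) : K) • z}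
  add_mem' := by
    intro a b ha hb σ
    rw [map_add, ha σ, hb σ, smul_add]
  zero_mem' := by
    intro σ
    rw [map_zero, smul_zero]
  smul_mem' := by
    intro c a ha σ
    rw [map_smul, ha σ, smul_comm]

/-!
(i) If `τ` fixes `σ i`, then `σ⁻¹ τ σ` fixes `i`, and the cocycle identity gives
`γ_i(σ⁻¹ τ σ) = γ_{σ i}(τ)`, while `χ(σ⁻¹ τ σ) = χ(τ)`.

(ii) Reindexing the sum gives `a_χ ∘ τ = χ(τ) a_χ`. If `τ ∈ W_i` has `γ_i(τ) ≠ χ(τ)`, then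
`τ e_i = γ_i(τ) e_i`, so `(γ_i(τ) - χ(τ)) a_χ(e_i) = 0`, and `M` is torsion-free over the
domain `K`.
-/

def IsCocycle {W I G : Type*} [Group W] [MulAction W I] [Mul G] (γ : I → W → G) : Prop :=
  ∀ (i : I) (σ τ : W), γ i (σ * τ) = γ (τ • i) σ * γ i τ

namespace IsCocycle

variable {W I G : Type*} [Group W] [MulAction W I] {γ : I → W → G}

theorem apply_one [Group G] (hγ : IsCocycle γ) (i : I) : γ i 1 = 1 := by
  simpa using hγ i 1 1

theorem apply_inv_mul [Group G] (hγ : IsCocycle γ) (i : I) (σ : W) :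
    γ (σ • i) σ⁻¹ * γ i σ = 1 := by
  rw [← hγ, inv_mul_cancel, hγ.apply_one]

theorem apply_conj [CommGroup G] (hγ : IsCocycle γ) {i : I} {σ τ : W}
    (hτ : τ • σ • i = σ • i) : γ i (σ⁻¹ * (τ * σ)) = γ (σ • i) τ := by
  rw [hγ, hγ, mul_smul, hτ, mul_left_comm, hγ.apply_inv_mul, mul_one]

end IsCocycle

theorem Ichi_smul_mem {K W I : Type*} [CommRing K] [Group W] [MulAction W I]
    {γ : I → W → Kˣ} (hγ : IsCocycle γ) (χ : W →* Kˣ) {i : I} (hi : i ∈ Ichi γ χ) (σ : W) :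
    σ • i ∈ Ichi γ χ := by
  intro τ hτ
  have hfix : (σ⁻¹ * (τ * σ)) • i = i := by rw [mul_smul, mul_smul, hτ, inv_smul_smul]
  rw [← hγ.apply_conj hτ, hi _ hfix, map_mul, map_mul, map_inv, mul_left_comm, inv_mul_cancel,
    mul_one]

section Monomial

variable {K W I : Type*} [CommRing K] [Group W] [MulAction W I] {γ : I → W → Kˣ}

theorem monAct_single (σ : W) (i : I) (c : K) :
    monAct γ σ (Finsupp.single i c) = (γ i σ : K) • Finsupp.single (σ • i) c := by
  simp [monAct]

theorem monAct_mul (hγ : IsCocycle γ) (σ τ : W) :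
    monAct γ (σ * τ) = monAct γ σ * monAct γ τ := by
  refine Finsupp.lhom_ext fun i c => ?_
  simp only [Module.End.mul_apply, monAct_single, map_smul, hγ i σ τ, Units.val_mul, mul_smul,
    mul_smul σ τ i]
  exact smul_comm _ _ _

variable [Fintype W]

theorem aChi_mul_monAct (hγ : IsCocycle γ) (χ : W →* Kˣ) (u : Kˣ) (τ : W) :
    aChi γ χ u * monAct γ τ = (χ τ : K) • aChi γ χ u := by
  have hsum : ∑ σ : W, (((χ σ)⁻¹ : Kˣ) : K) • monAct γ (σ * τ)
      = ∑ σ : W, (χ τ : K) • (((χ σ)⁻¹ : Kˣ) : K) • monAct γ σ := by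
    refine Fintype.sum_equiv (Equiv.mulRight τ) _ _ fun σ => ?_
    rw [Equiv.coe_mulRight, smul_smul, ← Units.val_mul, map_mul, mul_inv, mul_left_comm,
      mul_inv_cancel, mul_one]
  simp only [aChi, smul_mul_assoc, Finset.sum_mul, ← monAct_mul hγ]
  rw [hsum, ← Finset.smul_sum, smul_comm]

theorem aChi_eq_zero_of_monAct_eq_smul [IsDomain K] (hγ : IsCocycle γ) (χ : W →* Kˣ) (u : Kˣ)
    {τ : W} {c : Kˣ} (hc : c ≠ χ τ) {z : I →₀ K} (hz : monAct γ τ z = (c : K) • z) :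
    aChi γ χ u z = 0 := by
  have h : (c : K) • aChi γ χ u z = (χ τ : K) • aChi γ χ u z := by
    rw [← map_smul, ← hz, ← Module.End.mul_apply, aChi_mul_monAct hγ, LinearMap.smul_apply]
  rw [← sub_eq_zero, ← sub_smul] at h
  exact (smul_eq_zero.mp h).resolve_left (sub_ne_zero.mpr (Units.val_injective.ne hc))

end Monomial

/-- Lemma II.2. (i) `I(χ,M)` is `W`-stable;
(ii) if `K` is an integral domain and `|W| ∈ U(K)`, then `a_χ(e_i) = 0`
for every `i ∈ I₀(χ,M) = I ∖ I(χ,M)`. -/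
theorem Ichi_stable_and_aChi_vanishes {K : Type*} [CommRing K]
    {W : Type*} [Group W] [Fintype W] {I : Type*} [MulAction W I]
    (γ : I → W → Kˣ) (hγ : ∀ (i : I) (σ τ : W), γ i (σ * τ) = γ (τ • i) σ * γ i τ)
    (χ : W →* Kˣ) :
    (∀ i ∈ Ichi γ χ, ∀ σ : W, σ • i ∈ Ichi γ χ) ∧
    (IsDomain K → ∀ u : Kˣ, ((u : Kˣ) : K) = (Fintype.card W : K) →
      ∀ i ∉ Ichi γ χ, aChi γ χ u (Finsupp.single i 1) = 0) := by
  refine ⟨fun i hi σ => Ichi_smul_mem hγ χ hi σ, fun _ u _ i hi => ?_⟩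
  obtain ⟨τ, hτi, hτ⟩ : ∃ τ : W, τ • i = i ∧ γ i τ ≠ χ τ := by
    simpa [Ichi] using hi
  refine aChi_eq_zero_of_monAct_eq_smul hγ χ u hτ ?_
  rw [monAct_single, hτi, Finsupp.smul_single_one]
end
end

section
/- Let K be an integral domain, W ≤ S_d with |W| invertible in K, χ : W → U(K) a character, and let A = (a_{rt}) and A′ = (a′_{sh}) be n×d matrices over K. Then d_χ^W(ᵗA·A′) = Σ_{j∈J(χ,n,d)} |W_j|·A_{(j)}(χ)·A′_{(j)}(χ⁻¹). In particular, taking A′ = A, one obtains the generalized Lagrange identity d_χ^W(ᵗA·A) = Σ_{j∈J(χ,n,d)} |W_j|·A_{(j)}(χ)·A_{(j)}(χ⁻¹). -/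
noncomputable section

open scoped TensorProduct

/-- The action of a permutation `σ` of `Fin d` on the `d`-th tensor power
`T^d(E)`, determined by `σ • (x₁ ⊗ ⋯ ⊗ x_d) = x_{σ⁻¹(1)} ⊗ ⋯ ⊗ x_{σ⁻¹(d)}`. -/
def permAct (K : Type*) [CommRing K] (E : Type*) [AddCommGroup E] [Module K E]
    (d : ℕ) (σ : Equiv.Perm (Fin d)) :
    (⨂[K] (_ : Fin d), E) ≃ₗ[K] ⨂[K] (_ : Fin d), E :=
  PiTensorProduct.reindex K (fun _ : Fin d => E) σ

/-- The submodule `_{χ⁻¹}T^d(E)` of `T^d(E)` generated by the elements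
`χ⁻¹(σ) z − σ z` for `σ ∈ W`; the quotient by it is the `d`-th
semi-symmetric power `[χ]^d(E)` of weight `χ`. -/
def chiKer {K : Type*} [CommRing K] (E : Type*) [AddCommGroup E] [Module K E]
    {d : ℕ} (W : Subgroup (Equiv.Perm (Fin d))) (χ : W →* Kˣ) :
    Submodule K (⨂[K] (_ : Fin d), E) :=
  Submodule.span K {w | ∃ (σ : W) (z : ⨂[K] (_ : Fin d), E),
    w = (((χ σ)⁻¹ : Kˣ) : K) • z - permAct K E d (σ : Equiv.Perm (Fin d)) z}

/-- The `d`-th semi-symmetric power `[χ]^d(E) = T^d(E)/_{χ⁻¹}T^d(E)`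
of weight `χ` of the `K`-module `E`. -/
abbrev SemiPow {K : Type*} [CommRing K] (E : Type*) [AddCommGroup E] [Module K E]
    {d : ℕ} (W : Subgroup (Equiv.Perm (Fin d))) (χ : W →* Kˣ) :=
  (⨂[K] (_ : Fin d), E) ⧸ chiKer E W χ

/-- The decomposable `d-χ`-vector `x₁ χ ⋯ χ x_d`. -/
def semiMk {K : Type*} [CommRing K] {E : Type*} [AddCommGroup E] [Module K E]
    {d : ℕ} (W : Subgroup (Equiv.Perm (Fin d))) (χ : W →* Kˣ)
    (x : Fin d → E) : SemiPow E W χ :=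
  Submodule.Quotient.mk (PiTensorProduct.tprod K x)


/-- The generalized Schur function
`d_χ^W(A) = Σ_{σ ∈ W} χ(σ) · a_{σ⁻¹(1),1} ⋯ a_{σ⁻¹(d),d}`. -/
def schurFn {K : Type*} [CommRing K] {d : ℕ} (W : Subgroup (Equiv.Perm (Fin d)))
    (χ : W →* Kˣ) (A : Matrix (Fin d) (Fin d) K) : K :=
  ∑ᶠ σ : W, ((χ σ : Kˣ) : K) * ∏ t : Fin d, A (((σ : Equiv.Perm (Fin d)))⁻¹ t) t

/-- Strict lexicographic comparison of functions. -/
def lexLT {ι : Type*} [LT ι] {α : Type*} [LT α] (f g : ι → α) : Prop :=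
  Pi.Lex (· < ·) (fun {_} => (· < ·)) f g

/-- The set `J(χ,n,d)` of multi-indices `i ∈ [1,n]^d` that are
lexicographically minimal in their `W`-orbit (for the action
`(σ i)_t = i_{σ⁻¹(t)}`) and on whose stabilizer `W_i` the character `χ`
is trivial. -/
def Jset {K : Type*} [CommRing K] {d : ℕ} (W : Subgroup (Equiv.Perm (Fin d)))
    (χ : W →* Kˣ) (n : ℕ) : Set (Fin d → Fin n) :=
  {i | (∀ σ : W, i ∘ ⇑(((σ : Equiv.Perm (Fin d)))⁻¹) = i → χ σ = 1) ∧
       (∀ σ : W, ¬ lexLT (i ∘ ⇑(((σ : Equiv.Perm (Fin d)))⁻¹)) i)}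

/-- The order of the stabilizer `W_i` of a multi-index `i`. -/
def stabCard {d : ℕ} (W : Subgroup (Equiv.Perm (Fin d))) {n : ℕ}
    (i : Fin d → Fin n) : ℕ :=
  Nat.card {σ : W // i ∘ ⇑(((σ : Equiv.Perm (Fin d)))⁻¹) = i}

/-- `R` is a system of representatives of the left cosets of `W` modulo the
stabilizer `W_j` of the multi-index `j`. -/
def IsRepSystem {d n : ℕ} (W : Subgroup (Equiv.Perm (Fin d)))
    (j : Fin d → Fin n) (R : Set (Equiv.Perm (Fin d))) : Prop :=
  (∀ ρ ∈ R, ρ ∈ W) ∧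
  ∀ τ ∈ W, ∃! ρ, ρ ∈ R ∧ j ∘ ⇑(((ρ⁻¹ * τ))⁻¹) = j

open Classical in
/-- The `(j,(1,…,d))`-th row minor of weight `χ` of an `n×d` matrix `A`:
`A_{(j)}(χ) = Σ_{τ ∈ W^{(j)}} χ(τ)⁻¹ a_{τj,(1,…,d)}`, where `W^{(j)} = R`. -/
def rowMinor {K : Type*} [CommRing K] {d n : ℕ}
    (W : Subgroup (Equiv.Perm (Fin d))) (χ : W →* Kˣ)
    (A : Matrix (Fin n) (Fin d) K) (R : Set (Equiv.Perm (Fin d)))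
    (j : Fin d → Fin n) : K :=
  ∑ᶠ τ : W, if (τ : Equiv.Perm (Fin d)) ∈ R then
    (((χ τ)⁻¹ : Kˣ) : K) * ∏ t : Fin d, A (j ((((τ : Equiv.Perm (Fin d))))⁻¹ t)) t
  else 0

/-! Expanding each entry of `ᵗA·A′` writes `d_χ^W(ᵗA·A′)` as `Σ_k F(k)·a′_k`, where
`F(k) = Σ_{σ∈W} χ(σ)⁻¹ a_{σk}`. Reindexing gives `F(ρk) = χ(ρ)·F(k)`; over a domain `F` therefore
vanishes on every orbit on whose stabilizer `χ` is nontrivial, while on the other orbits grouping `W`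
into cosets of `W_j` gives `F(j) = |W_j|·A_{(j)}(χ)`. Parametrising each orbit by its
lexicographically least point `j` and the representatives `τ ∈ W^{(j)}`, the sum over the orbit of
`j` becomes `F(j)·Σ_τ χ(τ)·a′_{τj} = |W_j|·A_{(j)}(χ)·A′_{(j)}(χ⁻¹)`. -/
open Finset Function MulAction

section Transversal

variable {G X M : Type*} [Group G] [MulAction G X] [AddCommMonoid M]

namespace Subgroup.IsComplement

variable {S : Set G}

theorem sum_eq_card_nsmul_sum [Fintype G] [Fintype S] {H : Subgroup G} [Fintype H]
    (hS : IsComplement S H) (f : G → M) (hf : ∀ g, ∀ h ∈ H, f (g * h) = f g) :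
    ∑ g, f g = Nat.card H • ∑ s : S, f s := by
  rw [← Fintype.sum_bijective _ hS (fun p : S × H => f (p.1 * p.2)) f (fun _ => rfl),
    Fintype.sum_prod_type, smul_sum]
  refine sum_congr rfl fun s _ => ?_
  simp only [fun h : H => hf s h h.2, sum_const, card_univ, ← Nat.card_eq_fintype_card]
  rfl

variable {x : X}

theorem exists_smul_eq_smul (hS : IsComplement S (stabilizer G x)) (g : G) :
    ∃ s : S, (s : G) • x = g • x := by
  obtain ⟨s, hs, -⟩ := isComplement_iff_existsUnique_inv_mul_mem.mp hS g
  refine ⟨s, ?_⟩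
  rw [SetLike.mem_coe, mem_stabilizer_iff, mul_smul, inv_smul_eq_iff] at hs
  exact hs.symm

theorem smul_injective (hS : IsComplement S (stabilizer G x)) :
    Injective fun s : S => (s : G) • x := by
  intro s t hst
  obtain ⟨u, -, hu⟩ := isComplement_iff_existsUnique_inv_mul_mem.mp hS s
  have hs : (s : G)⁻¹ * s ∈ (stabilizer G x : Set G) := by simp
  have ht : (t : G)⁻¹ * s ∈ (stabilizer G x : Set G) := by
    rw [SetLike.mem_coe, mem_stabilizer_iff, mul_smul, inv_smul_eq_iff]
    exact hst
  exact (hu s hs).trans (hu t ht).symm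

end Subgroup.IsComplement

theorem sum_eq_sum_transversal_sum_smul [Fintype X] (T : Set X) [Fintype T]
    (S : X → Set G) [∀ t, Fintype (S t)] (hT : ∀ x, ∃! t, t ∈ T ∧ x ∈ orbit G t)
    (hS : ∀ t, Subgroup.IsComplement (S t) (stabilizer G t)) (φ : X → M) :
    ∑ x, φ x = ∑ t : T, ∑ s : S t, φ ((s : G) • (t : X)) := by
  have hbij : Bijective fun p : Σ t : T, S t => (p.2 : G) • (p.1 : X) := by
    constructor
    · rintro ⟨t, s⟩ ⟨t', s'⟩ h
      obtain rfl : t = t' := Subtype.ext <| (hT _).unique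
        ⟨t.2, mem_orbit_iff.mpr ⟨s, rfl⟩⟩ ⟨t'.2, mem_orbit_iff.mpr ⟨s', h.symm⟩⟩
      obtain rfl : s = s' := (hS t).smul_injective h
      rfl
    · intro x
      obtain ⟨t, ⟨ht, hx⟩, -⟩ := hT x
      obtain ⟨g, rfl⟩ := mem_orbit_iff.mp hx
      obtain ⟨s, hs⟩ := (hS t).exists_smul_eq_smul g
      exact ⟨⟨⟨t, ht⟩, s⟩, hs⟩
  rw [← Fintype.sum_bijective _ hbij (fun p => φ ((p.2 : G) • (p.1 : X))) φ fun _ => rfl,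
    Fintype.sum_sigma]

theorem existsUnique_forall_not_lt_smul [Finite G] {Y : Type*} [LinearOrder Y] {f : X → Y}
    (hf : Injective f) (x : X) : ∃! m, (∀ g : G, ¬ f (g • m) < f m) ∧ x ∈ orbit G m := by
  obtain ⟨g₀, hg₀⟩ := Finite.exists_min fun g : G => f (g • x)
  refine ⟨g₀ • x, ⟨fun g => ?_, mem_orbit_smul g₀ x⟩, fun m ⟨hm, hxm⟩ => ?_⟩
  · rw [smul_smul]
    exact (hg₀ _).not_gt
  · obtain ⟨h, rfl⟩ := mem_orbit_iff.mp hxm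
    refine hf (le_antisymm ?_ ?_)
    · simpa [mul_smul] using hm (g₀ * h)
    · simpa using hg₀ h⁻¹

end Transversal

section SchurFunction

-- `(σ • k) t = k (σ⁻¹ t)`: the action `(σi)_t = i_{σ⁻¹(t)}` of the paper, so that for `σ : W`,
-- `σ • i` is `i ∘ ⇑σ⁻¹` by definition, as in `Jset`, `stabCard` and `rowMinor`.
attribute [local instance] arrowAction

variable {K : Type*} [CommRing K] {d n : ℕ} (W : Subgroup (Equiv.Perm (Fin d))) (χ : W →* Kˣ)

def entryProd (A : Matrix (Fin n) (Fin d) K) (k : Fin d → Fin n) : K := ∏ t, A (k t) t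

theorem prod_apply_inv_eq_entryProd (A : Matrix (Fin n) (Fin d) K) (k : Fin d → Fin n)
    (σ : Equiv.Perm (Fin d)) : ∏ t, A (k t) (σ⁻¹ t) = entryProd A (σ⁻¹ • k) := by
  rw [← Equiv.prod_comp σ]
  simp only [Equiv.Perm.coe_inv, Equiv.symm_apply_apply]
  rfl

open Classical in
def fullRowMinor (A : Matrix (Fin n) (Fin d) K) (k : Fin d → Fin n) : K :=
  ∑ σ : W, ((χ σ)⁻¹ : Kˣ) * entryProd A (σ • k)

theorem schurFn_transpose_mul (A B : Matrix (Fin n) (Fin d) K) :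
    schurFn W χ (A.transpose * B) = ∑ k, fullRowMinor W χ A k * entryProd B k := by
  classical
  have hprod (σ : W) : ∏ t, (A.transpose * B) ((σ : Equiv.Perm (Fin d))⁻¹ t) t
      = ∑ k, entryProd A (σ⁻¹ • k) * entryProd B k := by
    simp only [Matrix.mul_apply, Matrix.transpose_apply, Finset.prod_univ_sum, prod_mul_distrib,
      prod_apply_inv_eq_entryProd]
    rfl
  rw [schurFn, finsum_eq_sum_of_fintype]
  simp only [hprod, mul_sum, fullRowMinor, sum_mul]
  rw [sum_comm]
  refine sum_congr rfl fun k _ => ?_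
  rw [← Equiv.sum_comp (Equiv.inv W)]
  simp [mul_assoc]

theorem fullRowMinor_smul (A : Matrix (Fin n) (Fin d) K) (k : Fin d → Fin n) (ρ : W) :
    fullRowMinor W χ A (ρ • k) = χ ρ * fullRowMinor W χ A k := by
  classical
  rw [fullRowMinor, fullRowMinor, mul_sum, ← Equiv.sum_comp (Equiv.mulRight ρ⁻¹)]
  refine sum_congr rfl fun σ _ => ?_
  simp [smul_smul, mul_assoc]

theorem fullRowMinor_eq_zero [NoZeroDivisors K] (A : Matrix (Fin n) (Fin d) K)
    {k : Fin d → Fin n} {π : W} (hπ : π • k = k) (hχ : χ π ≠ 1) :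
    fullRowMinor W χ A k = 0 := by
  have h := fullRowMinor_smul W χ A k π
  rw [hπ, ← sub_eq_zero, ← one_sub_mul] at h
  refine (mul_eq_zero.mp h).resolve_left ?_
  rw [sub_eq_zero, eq_comm, Units.val_eq_one]
  exact hχ

theorem IsRepSystem.isComplement {j : Fin d → Fin n} {R : Set (Equiv.Perm (Fin d))}
    (hR : IsRepSystem W j R) :
    Subgroup.IsComplement {τ : W | (τ : Equiv.Perm (Fin d)) ∈ R} (stabilizer W j) := by
  rw [Subgroup.isComplement_iff_existsUnique_inv_mul_mem]
  intro τ
  obtain ⟨ρ, ⟨hρR, hρ⟩, huniq⟩ := hR.2 τ τ.2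
  refine ⟨⟨⟨ρ, hR.1 ρ hρR⟩, hρR⟩, hρ, fun σ hσ => ?_⟩
  exact Subtype.ext (Subtype.ext (huniq σ ⟨σ.2, hσ⟩))

open Classical in
theorem rowMinor_eq_sum (A : Matrix (Fin n) (Fin d) K) (R : Set (Equiv.Perm (Fin d)))
    (j : Fin d → Fin n) :
    rowMinor W χ A R j = ∑ τ : {τ : W | (τ : Equiv.Perm (Fin d)) ∈ R},
      ((χ τ)⁻¹ : Kˣ) * entryProd A ((τ : W) • j) := by
  rw [rowMinor, finsum_eq_sum_of_fintype, ← sum_filter]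
  exact Finset.sum_subtype _ (by simp) _

open Classical in
theorem sum_fullRowMinor_smul_mul_entryProd (A B : Matrix (Fin n) (Fin d) K)
    (R : Set (Equiv.Perm (Fin d))) (j : Fin d → Fin n) :
    ∑ τ : {τ : W | (τ : Equiv.Perm (Fin d)) ∈ R},
        fullRowMinor W χ A ((τ : W) • j) * entryProd B ((τ : W) • j)
      = fullRowMinor W χ A j * rowMinor W χ⁻¹ B R j := by
  rw [rowMinor_eq_sum, mul_sum]
  refine sum_congr rfl fun τ _ => ?_
  rw [fullRowMinor_smul, MonoidHom.inv_apply, inv_inv]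
  ring

theorem fullRowMinor_eq_stabCard_mul_rowMinor (A : Matrix (Fin n) (Fin d) K)
    {j : Fin d → Fin n} {R : Set (Equiv.Perm (Fin d))} (hR : IsRepSystem W j R)
    (hχ : ∀ σ : W, σ • j = j → χ σ = 1) :
    fullRowMinor W χ A j = stabCard W j * rowMinor W χ A R j := by
  classical
  rw [fullRowMinor, (hR.isComplement W).sum_eq_card_nsmul_sum, rowMinor_eq_sum, nsmul_eq_mul]
  · rfl
  · intro σ h hh
    rw [mem_stabilizer_iff] at hh
    rw [mul_smul, hh, map_mul, hχ h hh, mul_one]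

theorem schurFn_transpose_mul_eq_finsum_Jset [NoZeroDivisors K] (A B : Matrix (Fin n) (Fin d) K)
    (R : (Fin d → Fin n) → Set (Equiv.Perm (Fin d)))
    (hR : ∀ j : Fin d → Fin n, IsRepSystem W j (R j)) :
    schurFn W χ (A.transpose * B)
      = ∑ᶠ j : {i : Fin d → Fin n // i ∈ Jset W χ n},
          (stabCard W j.1 : K) * rowMinor W χ A (R j.1) j.1 * rowMinor W χ⁻¹ B (R j.1) j.1 := by
  classical
  let T : Set (Fin d → Fin n) := {i | ∀ σ : W, ¬ lexLT (σ • i) i}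
  -- `lexLT f g` is `toLex f < toLex g` by definition.
  have hT (k : Fin d → Fin n) : ∃! t, t ∈ T ∧ k ∈ orbit W t :=
    existsUnique_forall_not_lt_smul toLex.injective k
  have hJT : (Jset W χ n).toFinset ⊆ T.toFinset := fun j hj => by
    simp only [Set.mem_toFinset] at hj ⊢
    exact hj.2
  let term (j : Fin d → Fin n) : K :=
    stabCard W j * rowMinor W χ A (R j) j * rowMinor W χ⁻¹ B (R j) j
  rw [finsum_subtype_eq_finsum_cond (f := term), finsum_mem_eq_toFinset_sum, schurFn_transpose_mul,
    sum_eq_sum_transversal_sum_smul T _ hT fun j => (hR j).isComplement W]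
  simp only [sum_fullRowMinor_smul_mul_entryProd]
  rw [Finset.sum_set_coe (f := fun j => fullRowMinor W χ A j * rowMinor W χ⁻¹ B (R j) j)]
  refine (sum_subset_zero_on_sdiff hJT (fun j hj => ?_) fun j hj => ?_).symm
  · simp only [mem_sdiff, Set.mem_toFinset] at hj
    obtain ⟨π, hπ, hχπ⟩ : ∃ π : W, π • j = j ∧ χ π ≠ 1 := by
      by_contra! h
      exact hj.2 ⟨h, hj.1⟩
    rw [fullRowMinor_eq_zero W χ A hπ hχπ, zero_mul]
  · rw [Set.mem_toFinset] at hj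
    rw [fullRowMinor_eq_stabCard_mul_rowMinor W χ A (hR j) hj.1]

end SchurFunction

theorem schurFn_lagrange_general {K : Type*} [CommRing K] [IsDomain K]
    {d n : ℕ} (W : Subgroup (Equiv.Perm (Fin d))) (χ : W →* Kˣ)
    (A A' : Matrix (Fin n) (Fin d) K)
    (R : (Fin d → Fin n) → Set (Equiv.Perm (Fin d)))
    (hR : ∀ j : Fin d → Fin n, IsRepSystem W j (R j)) :
    schurFn W χ (A.transpose * A')
      = ∑ᶠ j : {i : Fin d → Fin n // i ∈ Jset W χ n},
          (stabCard W j.1 : K) * rowMinor W χ A (R j.1) j.1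
            * rowMinor W χ⁻¹ A' (R j.1) j.1 ∧
    schurFn W χ (A.transpose * A)
      = ∑ᶠ j : {i : Fin d → Fin n // i ∈ Jset W χ n},
          (stabCard W j.1 : K) * rowMinor W χ A (R j.1) j.1
            * rowMinor W χ⁻¹ A (R j.1) j.1 :=
  ⟨schurFn_transpose_mul_eq_finsum_Jset W χ A A' R hR, schurFn_transpose_mul_eq_finsum_Jset W χ A A R hR⟩

/-- generalized Lagrange identity, Section III. For `n×d`
matrices `A, A′` over an integral domain `K` with `|W| ∈ U(K)`:
`d_χ^W(ᵗA·A′) = Σ_{j ∈ J(χ,n,d)} |W_j| · A_{(j)}(χ) · A′_{(j)}(χ⁻¹)`,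
and in particular `d_χ^W(ᵗA·A) = Σ_j |W_j| · A_{(j)}(χ) · A_{(j)}(χ⁻¹)`. -/
theorem schurFn_lagrange {K : Type*} [CommRing K] [IsDomain K]
    {d n : ℕ} (W : Subgroup (Equiv.Perm (Fin d))) (χ : W →* Kˣ)
    (hcard : IsUnit ((Nat.card W : K)))
    (A A' : Matrix (Fin n) (Fin d) K)
    (R : (Fin d → Fin n) → Set (Equiv.Perm (Fin d)))
    (hR : ∀ j : Fin d → Fin n, IsRepSystem W j (R j)) :
    schurFn W χ (A.transpose * A')
      = ∑ᶠ j : {i : Fin d → Fin n // i ∈ Jset W χ n},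
          (stabCard W j.1 : K) * rowMinor W χ A (R j.1) j.1
            * rowMinor W χ⁻¹ A' (R j.1) j.1 ∧
    schurFn W χ (A.transpose * A)
      = ∑ᶠ j : {i : Fin d → Fin n // i ∈ Jset W χ n},
          (stabCard W j.1 : K) * rowMinor W χ A (R j.1) j.1
            * rowMinor W χ⁻¹ A (R j.1) j.1 :=
  schurFn_lagrange_general W χ A A' R hR
end
end
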